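/- arXiv:1203.0919 — 5 statements merged into one kernel-verified Lean document; each statement's English description precedes it below -/
import Mathlib

section
/- Let D be a finite nonempty set, Ω a nonempty set, and L : D × Ω → ℝ a loss function such that each gamble f_d = −L(d,·) is bounded. Then for every ε > 0 there exist a finite partition 𝒜 of Ω into nonempty sets with |𝒜| ≤ (1 + 1/ε)^{|D|}, and a function L̂ : D × 𝒜 → ℝ, such that L ∼_ε L̂, i.e., for every d ∈ D, every A ∈ 𝒜, and every w ∈ A, |f_d(w) − f̂_d(A)| ≤ (sup f_d − inf f_d)·ε, where f̂_d(A) = −L̂(d,A). -/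
/-!
Cut the range `[inf f_d, sup f_d]` of each gamble into `n = ⌈1/ε⌉₊` cells of width
`(sup f_d - inf f_d) / n ≤ (sup f_d - inf f_d) ε`, and let the cell vector `Ω → (D → Fin n)`
record in which cell each `f_d(w)` lies. Its nonempty fibres partition `Ω` into at most
`n ^ |D| ≤ (1 + 1/ε) ^ |D|` sets, on each of which every `f_d` varies by at most one cell width,
so `L̂(d, A) := L(d, w_A)` for any chosen `w_A ∈ A` does the job.
-/

open Set

section Fibers

variable {Ω β : Type*} [Fintype β]

open Classical in
noncomputable def fibers (φ : Ω → β) : Finset (Set Ω) :=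
  (Finset.univ.image fun b => φ ⁻¹' {b}).filter Set.Nonempty

theorem mem_fibers {φ : Ω → β} {A : Set Ω} : A ∈ fibers φ ↔ ∃ w, φ ⁻¹' {φ w} = A := by
  simp only [fibers, Finset.mem_filter, Finset.mem_image, Finset.mem_univ, true_and]
  constructor
  · rintro ⟨⟨b, rfl⟩, w, hw⟩
    exact ⟨w, by rw [show φ w = b from hw]⟩
  · rintro ⟨w, rfl⟩
    exact ⟨⟨φ w, rfl⟩, w, rfl⟩

theorem nonempty_of_mem_fibers {φ : Ω → β} {A : Set Ω} (hA : A ∈ fibers φ) : A.Nonempty := by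
  obtain ⟨w, rfl⟩ := mem_fibers.1 hA
  exact ⟨w, rfl⟩

theorem disjoint_of_mem_fibers {φ : Ω → β} {A B : Set Ω} (hA : A ∈ fibers φ)
    (hB : B ∈ fibers φ) (hAB : A ≠ B) : Disjoint A B := by
  obtain ⟨w, rfl⟩ := mem_fibers.1 hA
  obtain ⟨v, rfl⟩ := mem_fibers.1 hB
  refine Disjoint.preimage φ (disjoint_singleton.2 fun h => hAB ?_)
  rw [h]

theorem biUnion_fibers (φ : Ω → β) : ⋃ A ∈ fibers φ, A = univ :=
  eq_univ_of_forall fun w => mem_biUnion (mem_fibers.2 ⟨w, rfl⟩) rfl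

open Classical in
theorem card_fibers_le (φ : Ω → β) : (fibers φ).card ≤ Fintype.card β :=
  (Finset.card_filter_le _ _).trans Finset.card_image_le

end Fibers

section Cells

/-- The index of the cell `[k/n, (k+1)/n]` containing `t ∈ [0, 1]`; the clamp puts `t = 1`
into the last cell. -/
noncomputable def cellIndex (n : ℕ) (t : ℝ) : ℕ := min (n - 1) ⌊t * n⌋₊

variable {n : ℕ} {t t' : ℝ}

theorem cellIndex_lt (hn : 0 < n) : cellIndex n t < n :=
  (min_le_left _ _).trans_lt (Nat.sub_lt hn one_pos)

theorem cellIndex_le_mul (ht : 0 ≤ t) : (cellIndex n t : ℝ) ≤ t * n :=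
  calc (cellIndex n t : ℝ) ≤ ⌊t * n⌋₊ := by exact_mod_cast min_le_right _ _
    _ ≤ t * n := Nat.floor_le (by positivity)

theorem mul_le_cellIndex_add_one (hn : 0 < n) (ht : t ≤ 1) : t * n ≤ cellIndex n t + 1 := by
  rcases le_total ⌊t * n⌋₊ (n - 1) with h | h
  · rw [cellIndex, min_eq_right h]
    exact (Nat.lt_floor_add_one _).le
  · rw [cellIndex, min_eq_left h, Nat.cast_sub hn, Nat.cast_one, sub_add_cancel]
    nlinarith [(Nat.cast_pos.2 hn : (0 : ℝ) < n)]

theorem abs_sub_le_of_cellIndex_eq (hn : 0 < n) (ht : t ∈ Icc (0 : ℝ) 1)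
    (ht' : t' ∈ Icc (0 : ℝ) 1) (h : cellIndex n t = cellIndex n t') : |t - t'| ≤ 1 / n := by
  have hnpos : (0 : ℝ) < n := Nat.cast_pos.2 hn
  have h₁ := cellIndex_le_mul (n := n) ht.1
  have h₂ := mul_le_cellIndex_add_one hn ht.2
  have h₁' := cellIndex_le_mul (n := n) ht'.1
  have h₂' := mul_le_cellIndex_add_one hn ht'.2
  rw [h] at h₁ h₂
  rw [le_div_iff₀ hnpos, ← abs_of_pos hnpos, ← abs_mul, abs_le]
  constructor <;> nlinarith

/-- For `a = b` the normalisation divides by zero; the statement is then trivially true. -/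
theorem abs_sub_le_of_cellIndex_normalize_eq {a b x x' : ℝ} (hn : 0 < n) (hx : x ∈ Icc a b)
    (hx' : x' ∈ Icc a b)
    (h : cellIndex n ((x - a) / (b - a)) = cellIndex n ((x' - a) / (b - a))) :
    |x - x'| ≤ (b - a) / n := by
  rcases (sub_nonneg.2 (hx.1.trans hx.2)).eq_or_lt with hab | hab
  · have hb : b = a := sub_eq_zero.1 hab.symm
    rw [le_antisymm (hb ▸ hx.2) hx.1, le_antisymm (hb ▸ hx'.2) hx'.1, sub_self, abs_zero,
      ← hab, zero_div]
  · have hunit {y : ℝ} (hy : y ∈ Icc a b) : (y - a) / (b - a) ∈ Icc (0 : ℝ) 1 :=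
      ⟨div_nonneg (by linarith [hy.1]) hab.le, (div_le_one hab).2 (by linarith [hy.2])⟩
    have key := abs_sub_le_of_cellIndex_eq hn (hunit hx) (hunit hx') h
    have hdiff : x - x' = ((x - a) / (b - a) - (x' - a) / (b - a)) * (b - a) := by
      field_simp; ring
    calc |x - x'| = |(x - a) / (b - a) - (x' - a) / (b - a)| * (b - a) := by
          rw [hdiff, abs_mul, abs_of_pos hab]
      _ ≤ 1 / n * (b - a) := by gcongr
      _ = (b - a) / n := by ring

end Cells

theorem one_div_natCeil_one_div_le {ε : ℝ} (hε : 0 < ε) : 1 / (⌈1 / ε⌉₊ : ℝ) ≤ ε := by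
  rw [div_le_iff₀ (by positivity), ← div_le_iff₀' hε]
  exact Nat.le_ceil _

theorem exists_cellVector {ι Ω : Type*} (f : ι → Ω → ℝ)
    (hf : ∀ i, BddAbove (range (f i)) ∧ BddBelow (range (f i))) {ε : ℝ} (hε : 0 < ε) :
    ∃ φ : Ω → ι → Fin ⌈1 / ε⌉₊, ∀ w w', φ w = φ w' → ∀ i,
      |f i w - f i w'| ≤ (sSup (range (f i)) - sInf (range (f i))) * ε := by
  have hn : 0 < ⌈1 / ε⌉₊ := Nat.ceil_pos.2 (by positivity)
  have hmem (i : ι) (w : Ω) : f i w ∈ Icc (sInf (range (f i))) (sSup (range (f i))) :=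
    ⟨csInf_le (hf i).2 ⟨w, rfl⟩, le_csSup (hf i).1 ⟨w, rfl⟩⟩
  refine ⟨fun w i => ⟨cellIndex _ ((f i w - sInf (range (f i))) /
      (sSup (range (f i)) - sInf (range (f i)))), cellIndex_lt hn⟩, fun w w' hww' i => ?_⟩
  have hcell := congrArg (fun φ => (φ i : ℕ)) hww'
  calc |f i w - f i w'| ≤ (sSup (range (f i)) - sInf (range (f i))) / ⌈1 / ε⌉₊ :=
        abs_sub_le_of_cellIndex_normalize_eq hn (hmem i w) (hmem i w') hcell
    _ = (sSup (range (f i)) - sInf (range (f i))) * (1 / ⌈1 / ε⌉₊) := by ring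
    _ ≤ (sSup (range (f i)) - sInf (range (f i))) * ε :=
        mul_le_mul_of_nonneg_left (one_div_natCeil_one_div_le hε)
          (sub_nonneg.2 ((hmem i w).1.trans (hmem i w).2))

theorem stmt_2_general {D : Type*} [Fintype D] {Ω : Type*} [Nonempty Ω]
    (L : D × Ω → ℝ)
    (hbdd : ∀ d : D, BddAbove (Set.range fun w => -L (d, w)) ∧
      BddBelow (Set.range fun w => -L (d, w)))
    (ε : ℝ) (hε : 0 < ε) :
    ∃ 𝒜 : Finset (Set Ω), ∃ Lhat : D → Set Ω → ℝ,
      (∀ A ∈ 𝒜, A.Nonempty) ∧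
      (∀ A ∈ 𝒜, ∀ B ∈ 𝒜, A ≠ B → Disjoint A B) ∧
      (⋃ A ∈ 𝒜, A) = Set.univ ∧
      (𝒜.card : ℝ) ≤ (1 + 1 / ε) ^ (Fintype.card D) ∧
      (∀ d : D, ∀ A ∈ 𝒜, ∀ w ∈ A,
        |(-L (d, w)) - (-(Lhat d A))| ≤
          (sSup (Set.range fun w' => -L (d, w')) -
            sInf (Set.range fun w' => -L (d, w'))) * ε) := by
  classical
  obtain ⟨φ, hφ⟩ := exists_cellVector (fun d w => -L (d, w)) hbdd hε
  refine ⟨fibers φ, fun d A => L (d, Classical.epsilon (· ∈ A)), fun A => nonempty_of_mem_fibers,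
    fun A hA B hB => disjoint_of_mem_fibers hA hB, biUnion_fibers φ, ?_, ?_⟩
  · calc ((fibers φ).card : ℝ) ≤ (⌈1 / ε⌉₊ : ℝ) ^ Fintype.card D := by
          exact_mod_cast (card_fibers_le φ).trans_eq (by simp)
      _ ≤ (1 + 1 / ε) ^ Fintype.card D := by
          gcongr
          linarith [Nat.ceil_lt_add_one (one_div_pos.2 hε).le]
  · intro d A hA w hw
    obtain ⟨v, rfl⟩ := mem_fibers.1 hA
    have hrep : Classical.epsilon (· ∈ φ ⁻¹' {φ v}) ∈ φ ⁻¹' {φ v} := 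
      Classical.epsilon_spec (p := (· ∈ φ ⁻¹' {φ v})) ⟨v, rfl⟩
    exact hφ w _ (hw.trans hrep.symm) d

/-- For a finite decision set `D` and a loss function `L : D × Ω → ℝ` with bounded
gambles `f_d = -L(d,·)`, for every `ε > 0` there is a finite partition `𝒜` of `Ω`
into nonempty sets with `|𝒜| ≤ (1 + 1/ε)^|D|` and an approximate loss
`L̂ : D × 𝒜 → ℝ` with `L ∼_ε L̂`. -/
theorem stmt_2 {D : Type*} [Fintype D] [Nonempty D] {Ω : Type*} [Nonempty Ω]
    (L : D × Ω → ℝ)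
    (hbdd : ∀ d : D, BddAbove (Set.range fun w => -L (d, w)) ∧
      BddBelow (Set.range fun w => -L (d, w)))
    (ε : ℝ) (hε : 0 < ε) :
    ∃ 𝒜 : Finset (Set Ω), ∃ Lhat : D → Set Ω → ℝ,
      (∀ A ∈ 𝒜, A.Nonempty) ∧
      (∀ A ∈ 𝒜, ∀ B ∈ 𝒜, A ≠ B → Disjoint A B) ∧
      (⋃ A ∈ 𝒜, A) = Set.univ ∧
      (𝒜.card : ℝ) ≤ (1 + 1 / ε) ^ (Fintype.card D) ∧
      (∀ d : D, ∀ A ∈ 𝒜, ∀ w ∈ A,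
        |(-L (d, w)) - (-(Lhat d A))| ≤
          (sSup (Set.range fun w' => -L (d, w')) -
            sInf (Set.range fun w' => -L (d, w'))) * ε) :=
  stmt_2_general L hbdd ε hε
end

section
/- Let n be a positive integer, δ > 0, and M an arbitrary (possibly non-convex, non-closed) subset of the standard simplex Δ^n ⊆ ℝ^n. Let N be the smallest natural number with N ≥ n/δ. Then there exists a finite subset M̂ of Δ^n such that: (i) for every x ∈ M there is y ∈ M̂ with ∑_{i=1}^n |x_i − y_i| ≤ δ; (ii) for every y ∈ M̂ there is x ∈ M with ∑_{i=1}^n |x_i − y_i| ≤ δ; and (iii) |M̂| ≤ binomial(N+n−1, n−1). -/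
/-!
Put `N = ⌈n / δ⌉₊` and round every point of `Δ^n` to the grid `(1/N) ℤ^n ∩ Δ^n`: take the floors
of the `N x_i` and raise as many of them by one as needed to restore the sum `N`. Each coordinate
then moves by at most `1/N`, so the `ℓ¹` error is at most `n / N ≤ δ`. The grid points within `δ`
of `M` form `M̂`, and stars and bars counts the grid.
-/

open Finset

theorem Finset.Nat.card_antidiagonalTuple (k n : ℕ) :
    #(Finset.Nat.antidiagonalTuple k n) = (k + n - 1).choose n := by
  rw [card_eq_of_equiv_fintype ((Equiv.subtypeEquivRight fun _ => Nat.mem_antidiagonalTuple).trans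
    (Sym.equivNatSumOfFintype (Fin k) n).symm), Sym.card_sym_eq_choose, Fintype.card_fin]

theorem exists_nat_sum_eq_forall_abs_sub_le_one {ι : Type*} [Fintype ι] {y : ι → ℝ}
    (hy : ∀ i, 0 ≤ y i) {N : ℕ} (hsum : ∑ i, y i = N) :
    ∃ k : ι → ℕ, ∑ i, k i = N ∧ ∀ i, |y i - k i| ≤ 1 := by
  classical
  set a : ι → ℕ := fun i => ⌊y i⌋₊
  have ha_le : ∀ i, (a i : ℝ) ≤ y i := fun i => Nat.floor_le (hy i)
  have ha_gt : ∀ i, y i < a i + 1 := fun i => Nat.lt_floor_add_one _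
  have hsum_le : ∑ i, a i ≤ N := by
    rw [← Nat.cast_le (α := ℝ), Nat.cast_sum, ← hsum]
    exact sum_le_sum fun i _ => ha_le i
  have hsum_ge : N ≤ ∑ i, a i + #(univ : Finset ι) := by
    rw [← Nat.cast_le (α := ℝ), ← hsum, Nat.cast_add, Nat.cast_sum, card_eq_sum_ones,
      Nat.cast_sum, ← sum_add_distrib]
    exact sum_le_sum fun i _ => by simpa using (ha_gt i).le
  obtain ⟨B, -, hB⟩ := exists_subset_card_eq (show N - ∑ i, a i ≤ #univ by omega)
  refine ⟨fun i => a i + if i ∈ B then 1 else 0, ?_, fun i => ?_⟩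
  · rw [sum_add_distrib, sum_boole]
    simp only [filter_mem_eq_inter, univ_inter, hB, Nat.cast_id]
    omega
  · dsimp only
    rw [abs_le]
    split_ifs <;> push_cast <;> constructor <;> linarith [ha_le i, ha_gt i]

theorem exists_nat_sum_eq_sum_abs_sub_div_le {ι : Type*} [Fintype ι] {x : ι → ℝ}
    (hx : x ∈ stdSimplex ℝ ι) {N : ℕ} (hN : 0 < N) :
    ∃ k : ι → ℕ, ∑ i, k i = N ∧ ∑ i, |x i - k i / N| ≤ Fintype.card ι / N := by
  have hN' : (0 : ℝ) < N := Nat.cast_pos.2 hN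
  obtain ⟨k, hk, hclose⟩ := exists_nat_sum_eq_forall_abs_sub_le_one (y := fun i => N * x i)
    (fun i => mul_nonneg hN'.le (hx.1 i)) (by rw [← mul_sum, hx.2, mul_one])
  refine ⟨k, hk, ?_⟩
  calc ∑ i, |x i - k i / N| = ∑ i, |N * x i - k i| / N := by
        congr! 1 with i
        rw [show x i - k i / N = (N * x i - k i) / N by field_simp, abs_div, abs_of_pos hN']
    _ ≤ ∑ _i : ι, 1 / (N : ℝ) := by gcongr with i; exact hclose i
    _ = Fintype.card ι / N := by simp [div_eq_mul_inv]

theorem div_mem_stdSimplex {ι : Type*} [Fintype ι] {k : ι → ℕ} {N : ℕ} (hN : N ≠ 0)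
    (hk : ∑ i, k i = N) : (fun i => (k i : ℝ) / N) ∈ stdSimplex ℝ ι := by
  refine ⟨fun i => by positivity, ?_⟩
  rw [← sum_div, ← Nat.cast_sum, hk, div_self (Nat.cast_ne_zero.2 hN)]

/-- Any subset `M` of the standard simplex `Δ^n` can be `δ`-approximated (in both
directions, in `ℓ¹` norm) by a finite subset `M̂` of `Δ^n` with
`|M̂| ≤ (N + n - 1).choose (n - 1)`, where `N` is the smallest natural number
with `N ≥ n / δ`. -/
theorem stmt_3 (n : ℕ) (hn : 0 < n) (δ : ℝ) (hδ : 0 < δ)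
    (M : Set (Fin n → ℝ))
    (hM : M ⊆ {x : Fin n → ℝ | (∀ i, 0 ≤ x i) ∧ ∑ i, x i = 1}) :
    ∃ Mhat : Finset (Fin n → ℝ),
      (↑Mhat : Set (Fin n → ℝ)) ⊆ {x : Fin n → ℝ | (∀ i, 0 ≤ x i) ∧ ∑ i, x i = 1} ∧
      (∀ x ∈ M, ∃ y ∈ Mhat, ∑ i, |x i - y i| ≤ δ) ∧
      (∀ y ∈ Mhat, ∃ x ∈ M, ∑ i, |x i - y i| ≤ δ) ∧
      Mhat.card ≤ (⌈(n : ℝ) / δ⌉₊ + n - 1).choose (n - 1) := by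
  classical
  set N := ⌈(n : ℝ) / δ⌉₊
  have hN : 0 < N := Nat.ceil_pos.2 (by positivity)
  have hnN : (n : ℝ) / N ≤ δ := by
    rw [div_le_iff₀ (by positivity), mul_comm, ← div_le_iff₀ hδ]
    exact Nat.le_ceil _
  let grid := (Nat.antidiagonalTuple n N).image fun k i => (k i : ℝ) / N
  refine ⟨grid.filter fun y => ∃ x ∈ M, ∑ i, |x i - y i| ≤ δ, ?_, ?_, ?_, ?_⟩
  · intro y hy
    obtain ⟨k, hk, rfl⟩ := mem_image.1 (mem_filter.1 hy).1
    exact div_mem_stdSimplex hN.ne' (Nat.mem_antidiagonalTuple.1 hk)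
  · intro x hx
    obtain ⟨k, hk, hdist⟩ := exists_nat_sum_eq_sum_abs_sub_div_le (hM hx) hN
    have hclose : ∑ i, |x i - k i / N| ≤ δ := hdist.trans (by rwa [Fintype.card_fin])
    exact ⟨_, mem_filter.2 ⟨mem_image_of_mem _ (Nat.mem_antidiagonalTuple.2 hk), x, hx, hclose⟩,
      hclose⟩
  · exact fun y hy => (mem_filter.1 hy).2
  · calc _ ≤ #grid := card_filter_le _ _
      _ ≤ #(Nat.antidiagonalTuple n N) := card_image_le
      _ = (N + n - 1).choose (n - 1) := by
        rw [Nat.card_antidiagonalTuple, add_comm n N]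
        exact Nat.choose_symm_of_eq_add (by omega)
end

section
/- Let Ω be a measurable space, 𝒜 a finite partition of Ω into nonempty measurable sets, P a probability measure on Ω, f : Ω → ℝ a bounded measurable function, f̂ : 𝒜 → ℝ, and P̂ a probability mass function on 𝒜. If ε ≥ 0, δ ≥ 0, f ∼_ε f̂ and P ∼_δ P̂, then |∫_Ω f dP − ∑_{A∈𝒜} f̂(A)·P̂(A)| ≤ (sup f − inf f)·(ε + δ(1+2ε)). -/
open MeasureTheory

/-!
Split the error at the intermediate quantity `∑_A f̂(A) P(A)`. On each cell `A`, `f` stays within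
`(sup f - inf f) ε` of `f̂(A)`, so integrating cell by cell gives `|∫ f dP - ∑_A f̂(A) P(A)| ≤
(sup f - inf f) ε`. For the change of weights from `P` to `P̂`, both have total mass one, so `f̂` may be
recentred at the midpoint `c` of `[inf f, sup f]` for free; since every cell contains a point of `Ω`,
`|f̂(A) - c| ≤ (sup f - inf f)(1/2 + ε)`, and the second error is at most that times `δ`.
-/

section Partition

variable {Ω : Type*} [MeasurableSpace Ω] {𝒜 : Finset (Set Ω)}

lemma sum_measureReal_eq_of_partition (μ : Measure Ω) [IsFiniteMeasure μ]
    (hmeas : ∀ A ∈ 𝒜, MeasurableSet A) (hdisj : (𝒜 : Set (Set Ω)).PairwiseDisjoint id)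
    (hcover : ⋃ A ∈ 𝒜, A = Set.univ) :
    ∑ A ∈ 𝒜, μ.real A = μ.real Set.univ := by
  rw [← hcover]
  exact (measureReal_biUnion_finset hdisj hmeas).symm

lemma integral_eq_sum_setIntegral_of_partition {E : Type*} [NormedAddCommGroup E]
    [NormedSpace ℝ E] {μ : Measure Ω} {f : Ω → E} (hf : Integrable f μ)
    (hmeas : ∀ A ∈ 𝒜, MeasurableSet A) (hdisj : (𝒜 : Set (Set Ω)).PairwiseDisjoint id)
    (hcover : ⋃ A ∈ 𝒜, A = Set.univ) :
    ∫ w, f w ∂μ = ∑ A ∈ 𝒜, ∫ w in A, f w ∂μ := by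
  rw [← setIntegral_univ, ← hcover]
  exact integral_biUnion_finset 𝒜 hmeas hdisj fun A _ => hf.integrableOn

lemma abs_integral_sub_sum_le_of_partition {μ : Measure Ω} [IsFiniteMeasure μ] {f : Ω → ℝ}
    (hf : Integrable f μ) (hmeas : ∀ A ∈ 𝒜, MeasurableSet A)
    (hdisj : (𝒜 : Set (Set Ω)).PairwiseDisjoint id) (hcover : ⋃ A ∈ 𝒜, A = Set.univ)
    {g : Set Ω → ℝ} {η : ℝ} (hfg : ∀ A ∈ 𝒜, ∀ w ∈ A, |f w - g A| ≤ η) :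
    |∫ w, f w ∂μ - ∑ A ∈ 𝒜, g A * μ.real A| ≤ η * μ.real Set.univ := by
  have hcell : ∀ A ∈ 𝒜, |∫ w in A, f w ∂μ - g A * μ.real A| ≤ η * μ.real A := by
    intro A hA
    have hsub : ∫ w in A, (f w - g A) ∂μ = ∫ w in A, f w ∂μ - g A * μ.real A := by
      rw [integral_sub hf.integrableOn (integrableOn_const (measure_ne_top μ A)),
        setIntegral_const, smul_eq_mul, mul_comm]
    rw [← hsub]
    exact norm_setIntegral_le_of_norm_le_const (measure_lt_top μ A)
      fun w hw => (Real.norm_eq_abs _).trans_le (hfg A hA w hw)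
  calc |∫ w, f w ∂μ - ∑ A ∈ 𝒜, g A * μ.real A|
      = |∑ A ∈ 𝒜, (∫ w in A, f w ∂μ - g A * μ.real A)| := by
        rw [integral_eq_sum_setIntegral_of_partition hf hmeas hdisj hcover,
          Finset.sum_sub_distrib]
    _ ≤ ∑ A ∈ 𝒜, η * μ.real A := (Finset.abs_sum_le_sum_abs _ _).trans (Finset.sum_le_sum hcell)
    _ = η * μ.real Set.univ := by
        rw [← Finset.mul_sum, sum_measureReal_eq_of_partition μ hmeas hdisj hcover]

end Partition

lemma abs_sum_mul_sub_sum_mul_le {ι : Type*} (s : Finset ι) {g p q : ι → ℝ} {c r : ℝ}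
    (hpq : ∑ i ∈ s, p i = ∑ i ∈ s, q i) (hg : ∀ i ∈ s, |g i - c| ≤ r) :
    |∑ i ∈ s, g i * p i - ∑ i ∈ s, g i * q i| ≤ r * ∑ i ∈ s, |p i - q i| := by
  have hcentre : ∑ i ∈ s, g i * p i - ∑ i ∈ s, g i * q i
      = ∑ i ∈ s, (g i - c) * (p i - q i) := by
    simp only [sub_mul, mul_sub, Finset.sum_sub_distrib, ← Finset.mul_sum, hpq]
    ring
  rw [hcentre, Finset.mul_sum]
  refine (Finset.abs_sum_le_sum_abs _ _).trans (Finset.sum_le_sum fun i hi => ?_)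
  rw [abs_mul]
  exact mul_le_mul_of_nonneg_right (hg i hi) (abs_nonneg _)

lemma abs_sub_midpoint_le {m M x y η : ℝ} (hm : m ≤ x) (hM : x ≤ M) (hxy : |x - y| ≤ η) :
    |y - (m + M) / 2| ≤ (M - m) / 2 + η := by
  rw [abs_le] at hxy ⊢
  constructor <;> linarith

theorem stmt_4_general {Ω : Type*} [MeasurableSpace Ω]
    (𝒜 : Finset (Set Ω))
    (hne : ∀ A ∈ 𝒜, A.Nonempty)
    (hmeas : ∀ A ∈ 𝒜, MeasurableSet A)
    (hdisj : ∀ A ∈ 𝒜, ∀ B ∈ 𝒜, A ≠ B → Disjoint A B)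
    (hcover : (⋃ A ∈ 𝒜, A) = Set.univ)
    (P : Measure Ω) [IsProbabilityMeasure P]
    (f : Ω → ℝ) (hf : Measurable f)
    (hfa : BddAbove (Set.range f)) (hfb : BddBelow (Set.range f))
    (fhat : Set Ω → ℝ) (Phat : Set Ω → ℝ)
    (hPhat1 : ∑ A ∈ 𝒜, Phat A = 1)
    (ε δ : ℝ) (hε : 0 ≤ ε) (hδ : 0 ≤ δ)
    (hfsim : ∀ A ∈ 𝒜, ∀ w ∈ A,
      |f w - fhat A| ≤ (sSup (Set.range f) - sInf (Set.range f)) * ε)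
    (hPsim : ∑ A ∈ 𝒜, |(P A).toReal - Phat A| ≤ δ) :
    |(∫ w, f w ∂P) - ∑ A ∈ 𝒜, fhat A * Phat A| ≤
      (sSup (Set.range f) - sInf (Set.range f)) * (ε + δ * (1 + 2 * ε)) := by
  set M := sSup (Set.range f)
  set m := sInf (Set.range f)
  have hfM : ∀ w, f w ≤ M := fun w => le_csSup hfa ⟨w, rfl⟩
  have hmf : ∀ w, m ≤ f w := fun w => csInf_le hfb ⟨w, rfl⟩
  have hmM : m ≤ M := by
    obtain ⟨w⟩ := nonempty_of_isProbabilityMeasure P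
    exact (hmf w).trans (hfM w)
  have hint : Integrable f P := Integrable.of_bound hf.aestronglyMeasurable (max |m| |M|)
    (ae_of_all _ fun w => abs_le_max_abs_abs (hmf w) (hfM w))
  have hcells : |∫ w, f w ∂P - ∑ A ∈ 𝒜, fhat A * P.real A| ≤ (M - m) * ε := by
    simpa using abs_integral_sub_sum_le_of_partition hint hmeas hdisj hcover hfsim
  have hweights : |∑ A ∈ 𝒜, fhat A * P.real A - ∑ A ∈ 𝒜, fhat A * Phat A|
      ≤ ((M - m) / 2 + (M - m) * ε) * δ := by
    have hmass : ∑ A ∈ 𝒜, P.real A = ∑ A ∈ 𝒜, Phat A := by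
      rw [sum_measureReal_eq_of_partition P hmeas hdisj hcover, hPhat1, probReal_univ]
    refine (abs_sum_mul_sub_sum_mul_le 𝒜 (c := (m + M) / 2)
      (r := (M - m) / 2 + (M - m) * ε) hmass fun A hA => ?_).trans ?_
    · obtain ⟨w, hw⟩ := hne A hA
      exact abs_sub_midpoint_le (hmf w) (hfM w) (hfsim A hA w hw)
    · gcongr
      exact hPsim
  calc |∫ w, f w ∂P - ∑ A ∈ 𝒜, fhat A * Phat A|
      ≤ (M - m) * ε + ((M - m) / 2 + (M - m) * ε) * δ :=
        (abs_sub_le _ _ _).trans (add_le_add hcells hweights)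
    _ ≤ (M - m) * (ε + δ * (1 + 2 * ε)) := by
        linarith [mul_nonneg (sub_nonneg.2 hmM) (mul_nonneg hδ (by linarith : (0:ℝ) ≤ 1 / 2 + ε))]

/-- First bound of Lemma 3: if `f ∼_ε f̂` and `P ∼_δ P̂` then
`|E_P(f) − E_P̂(f̂)| ≤ (sup f − inf f)(ε + δ(1 + 2ε))`. -/
theorem stmt_4 {Ω : Type*} [MeasurableSpace Ω] [Nonempty Ω]
    (𝒜 : Finset (Set Ω))
    (hne : ∀ A ∈ 𝒜, A.Nonempty)
    (hmeas : ∀ A ∈ 𝒜, MeasurableSet A)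
    (hdisj : ∀ A ∈ 𝒜, ∀ B ∈ 𝒜, A ≠ B → Disjoint A B)
    (hcover : (⋃ A ∈ 𝒜, A) = Set.univ)
    (P : Measure Ω) [IsProbabilityMeasure P]
    (f : Ω → ℝ) (hf : Measurable f)
    (hfa : BddAbove (Set.range f)) (hfb : BddBelow (Set.range f))
    (fhat : Set Ω → ℝ) (Phat : Set Ω → ℝ)
    (hPhat0 : ∀ A ∈ 𝒜, 0 ≤ Phat A) (hPhat1 : ∑ A ∈ 𝒜, Phat A = 1)
    (ε δ : ℝ) (hε : 0 ≤ ε) (hδ : 0 ≤ δ)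
    (hfsim : ∀ A ∈ 𝒜, ∀ w ∈ A,
      |f w - fhat A| ≤ (sSup (Set.range f) - sInf (Set.range f)) * ε)
    (hPsim : ∑ A ∈ 𝒜, |(P A).toReal - Phat A| ≤ δ) :
    |(∫ w, f w ∂P) - ∑ A ∈ 𝒜, fhat A * Phat A| ≤
      (sSup (Set.range f) - sInf (Set.range f)) * (ε + δ * (1 + 2 * ε)) :=
  stmt_4_general 𝒜 hne hmeas hdisj hcover P f hf hfa hfb fhat Phat hPhat1 ε δ hε hδ hfsim hPsim
end

section
/- Let Ω be a nonempty finite set, D a finite nonempty set, L : D × Ω → ℝ a loss function with f_d = −L(d,·), and suppose R_D = max_{d∈D}(max_w f_d(w) − min_w f_d(w)) > 0. Let ℳ be a nonempty set of probability vectors on Ω. Then for every ε ≥ 0: max^ε(Ω,D,closure(ℳ),L) = ⋂_{δ>0} max^{ε+δ}(Ω,D,ℳ,L), where the closure is taken in ℝ^Ω with the standard topology. -/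
/-- Expected utility of decision `d` under probability vector `p`,
for loss `L` (`f_d = -L(d,·)`). -/
def expUtil {Ω D : Type*} [Fintype Ω] (p : Ω → ℝ) (L : D → Ω → ℝ) (d : D) : ℝ :=
  ∑ w, p w * (-L d w)

/-- `R_D = max_{d∈D} (max_w f_d(w) − min_w f_d(w))`. -/
noncomputable def lossRange {Ω D : Type*} [Fintype Ω] [Nonempty Ω] [Fintype D] [Nonempty D]
    (L : D → Ω → ℝ) : ℝ :=
  Finset.univ.sup' Finset.univ_nonempty
    (fun d : D => Finset.univ.sup' Finset.univ_nonempty (fun w : Ω => -L d w) -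
      Finset.univ.inf' Finset.univ_nonempty (fun w : Ω => -L d w))

/-- The set of `ε`-maximal decisions `max^ε(Ω,D,ℳ,L)`. -/
noncomputable def maxSet {Ω D : Type*} [Fintype Ω] [Nonempty Ω] [Fintype D] [Nonempty D]
    (ε : ℝ) (ℳ : Set (Ω → ℝ)) (L : D → Ω → ℝ) : Set D :=
  {d : D | ∀ e : D, ∃ p ∈ ℳ, expUtil p L e - expUtil p L d ≤ ε * lossRange L}

/-!
The gap `p ↦ E_p(e) - E_p(d)` is continuous in `p`. Passing from `closure ℳ` to `ℳ` therefore
costs an arbitrarily small slack, which gives `⊆`. Conversely, `closure ℳ` is compact (it lies in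
the standard simplex), so the gap attains its infimum over `closure ℳ`; that infimum is at most
`(ε + δ) R_D` for every `δ > 0`, hence at most `ε R_D`, which gives `⊇`.
-/

open Set

section ClosureApproximation

variable {X α : Type*} [TopologicalSpace X] [LinearOrder α] [TopologicalSpace α]

theorem exists_mem_lt_of_mem_closure [OrderClosedTopology α] {M : Set X} {g : X → α}
    (hg : Continuous g) {p : X} (hp : p ∈ closure M) {c : α} (hpc : g p < c) :
    ∃ q ∈ M, g q < c := by
  obtain ⟨q, hqc, hqM⟩ := mem_closure_iff.mp hp _ (isOpen_lt hg continuous_const) hpc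
  exact ⟨q, hqM, hqc⟩

theorem exists_mem_closure_le_of_forall_lt [ClosedIicTopology α] [DenselyOrdered α]
    [NoMaxOrder α] {M : Set X} (hM : IsCompact (closure M)) {g : X → α} (hg : Continuous g)
    {c : α} (h : ∀ c', c < c' → ∃ q ∈ M, g q ≤ c') : ∃ p ∈ closure M, g p ≤ c := by
  obtain ⟨c', hc'⟩ := exists_gt c
  obtain ⟨q₀, hq₀, -⟩ := h c' hc'
  obtain ⟨p, hp, hmin⟩ := hM.exists_isMinOn ⟨q₀, subset_closure hq₀⟩ hg.continuousOn
  refine ⟨p, hp, le_of_forall_gt_imp_ge_of_dense fun c' hc' => ?_⟩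
  obtain ⟨q, hq, hqc⟩ := h c' hc'
  exact (hmin (subset_closure hq)).trans hqc

end ClosureApproximation

theorem continuous_expUtil {Ω D : Type*} [Fintype Ω] (L : D → Ω → ℝ) (d : D) :
    Continuous fun p : Ω → ℝ => expUtil p L d := by
  unfold expUtil
  fun_prop

theorem stmt_8_general {Ω : Type*} [Fintype Ω] [Nonempty Ω]
    {D : Type*} [Fintype D] [Nonempty D]
    (L : D → Ω → ℝ) (hR : 0 < lossRange L)
    (ℳ : Set (Ω → ℝ))
    (hℳ : ∀ p ∈ ℳ, (∀ w, 0 ≤ p w) ∧ ∑ w, p w = 1)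
    (ε : ℝ) :
    maxSet ε (closure ℳ) L = ⋂ (δ : ℝ) (_ : 0 < δ), maxSet (ε + δ) ℳ L := by
  have hgap (e d : D) : Continuous fun p => expUtil p L e - expUtil p L d :=
    (continuous_expUtil L e).sub (continuous_expUtil L d)
  have hK : IsCompact (closure ℳ) := (isCompact_stdSimplex ℝ Ω).of_isClosed_subset
    isClosed_closure (closure_minimal hℳ (isClosed_stdSimplex ℝ Ω))
  ext d
  simp only [mem_iInter, maxSet, mem_ofPred_eq]
  constructor
  · intro hd δ hδ e
    obtain ⟨p, hp, hpe⟩ := hd e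
    obtain ⟨q, hq, hqe⟩ := exists_mem_lt_of_mem_closure (hgap e d) hp
      (c := (ε + δ) * lossRange L) (by linarith [mul_pos hδ hR])
    exact ⟨q, hq, hqe.le⟩
  · intro hd e
    refine exists_mem_closure_le_of_forall_lt hK (hgap e d) fun c hc => ?_
    obtain ⟨q, hq, hqe⟩ := hd ((c - ε * lossRange L) / lossRange L) (by positivity) e
    refine ⟨q, hq, hqe.trans_eq ?_⟩
    field_simp
    ring

/-- Lemma 4, Eq. (7): `max^ε(Ω,D,closure(ℳ),L) = ⋂_{δ>0} max^{ε+δ}(Ω,D,ℳ,L)`. -/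
theorem stmt_8 {Ω : Type*} [Fintype Ω] [Nonempty Ω]
    {D : Type*} [Fintype D] [Nonempty D]
    (L : D → Ω → ℝ) (hR : 0 < lossRange L)
    (ℳ : Set (Ω → ℝ)) (hℳne : ℳ.Nonempty)
    (hℳ : ∀ p ∈ ℳ, (∀ w, 0 ≤ p w) ∧ ∑ w, p w = 1)
    (ε : ℝ) (hε : 0 ≤ ε) :
    maxSet ε (closure ℳ) L = ⋂ (δ : ℝ) (_ : 0 < δ), maxSet (ε + δ) ℳ L :=
  stmt_8_general L hR ℳ hℳ ε
end

section
/- Let Ω be a nonempty finite set, D a nonempty set, L : D × Ω → ℝ a loss function with f_d = −L(d,·), and ℳ a nonempty set of probability vectors on Ω. Then max(Ω,D,ℳ,L) = max(Ω,D,convexHull(ℳ),L), where the convex hull is taken in ℝ^Ω; that is, a decision d is undominated relative to ℳ if and only if it is undominated relative to the convex hull of ℳ. -/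
/-- The set of maximal (undominated) decisions `max(Ω,D,ℳ,L)`. -/
def maxSet0 {Ω D : Type*} [Fintype Ω] (ℳ : Set (Ω → ℝ)) (L : D → Ω → ℝ) : Set D :=
  {d : D | ∀ e : D, ∃ p ∈ ℳ, expUtil p L e ≤ expUtil p L d}

/-! Maximality is a statement about the sign of the linear functional `p ↦ E_p(d) - E_p(e)`;
by the maximum principle, such a functional is nonnegative somewhere on `convexHull ℳ` only if
it is nonnegative somewhere on `ℳ`. -/

section
variable {Ω D : Type*} [Fintype Ω]

def expUtilLinearMap (L : D → Ω → ℝ) (d : D) : (Ω → ℝ) →ₗ[ℝ] ℝ where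
  toFun p := expUtil p L d
  map_add' p q := by simp only [expUtil, Pi.add_apply, add_mul, Finset.sum_add_distrib]
  map_smul' c p := by simp only [expUtil, Pi.smul_apply, smul_eq_mul, mul_assoc, ← Finset.mul_sum,
    RingHom.id_apply]

theorem exists_mem_expUtil_le_of_mem_convexHull {ℳ : Set (Ω → ℝ)} (L : D → Ω → ℝ) {d e : D}
    {p : Ω → ℝ} (hp : p ∈ convexHull ℝ ℳ) (hle : expUtil p L e ≤ expUtil p L d) :
    ∃ q ∈ ℳ, expUtil q L e ≤ expUtil q L d := by
  let gain := expUtilLinearMap L d - expUtilLinearMap L e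
  obtain ⟨q, hq, hpq⟩ :=
    (gain.convexOn convex_univ).exists_ge_of_mem_convexHull (Set.subset_univ ℳ) hp
  have hgain : 0 ≤ gain q := (sub_nonneg.mpr hle).trans hpq
  exact ⟨q, hq, sub_nonneg.mp hgain⟩

theorem maxSet0_convexHull (ℳ : Set (Ω → ℝ)) (L : D → Ω → ℝ) :
    maxSet0 (convexHull ℝ ℳ) L = maxSet0 ℳ L := by
  refine Set.Subset.antisymm (fun d hd e => ?_) (fun d hd e => ?_)
  · obtain ⟨p, hp, hle⟩ := hd e
    exact exists_mem_expUtil_le_of_mem_convexHull L hp hle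
  · obtain ⟨p, hp, hle⟩ := hd e
    exact ⟨p, subset_convexHull ℝ ℳ hp, hle⟩

end

theorem stmt_13_general {Ω : Type*} [Fintype Ω]
    {D : Type*}
    (L : D → Ω → ℝ)
    (ℳ : Set (Ω → ℝ)) :
    maxSet0 ℳ L = maxSet0 (convexHull ℝ ℳ) L :=
  (maxSet0_convexHull ℳ L).symm

/-- Maximality is unchanged when passing to the convex hull of the credal set:
`max(Ω,D,ℳ,L) = max(Ω,D,cohull(ℳ),L)`. -/
theorem stmt_13 {Ω : Type*} [Fintype Ω] [Nonempty Ω]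
    {D : Type*} [Nonempty D]
    (L : D → Ω → ℝ)
    (ℳ : Set (Ω → ℝ)) (hℳne : ℳ.Nonempty)
    (hℳ : ∀ p ∈ ℳ, (∀ w, 0 ≤ p w) ∧ ∑ w, p w = 1) :
    maxSet0 ℳ L = maxSet0 (convexHull ℝ ℳ) L :=
  stmt_13_general L ℳ
end
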